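/- Asynchronous incremental voting on K_n with three consecutive opinions, exact product recursion: suppose X_v(0) ∈ {1,2,3} for all v. Then for every t ≥ 0, E[N₁(t+1)·N₃(t+1) | X(t)] = (1 − (N₁(t)+N₃(t))/n²)·N₁(t)·N₃(t). -/

import Mathlib

/-!
STATEMENT 15: Asynchronous incremental voting on `K_n` with three consecutive opinions,
exact product recursion: if all opinions lie in `{1,2,3}`, then for every `t ≥ 0`,
`E[N₁(t+1)·N₃(t+1) | X(t)] = (1 − (N₁(t)+N₃(t))/n²)·N₁(t)·N₃(t)`.

Since the process is a time-homogeneous Markov chain and opinions stay in `{1,2,3}`,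
this is formalized as the corresponding equality for the one-step transition
distribution from an arbitrary configuration with opinions in `{1,2,3}`.
-/

namespace KnAsync15

/-- The incremental voting update rule. -/
def updateRule (a b : ℤ) : ℤ := if a < b then a + 1 else if b < a then a - 1 else a

/-- Expected value of a real-valued function under a probability mass function. -/
noncomputable def expVal {α : Type*} (p : PMF α) (f : α → ℝ) : ℝ :=
  ∑' a, (p a).toReal * f a

/-- One step of asynchronous incremental voting on `K_n`: a uniformly random pair
`(v, w)` is chosen and vertex `v` updates using `w`'s opinion. -/
noncomputable def step (n : ℕ) [NeZero n] (x : Fin n → ℤ) : PMF (Fin n → ℤ) :=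
  (PMF.uniformOfFintype (Fin n × Fin n)).map
    fun p => Function.update x p.1 (updateRule (x p.1) (x p.2))

/-- `count n i x` is `N_i`: the number of vertices holding opinion `i`. -/
def count (n : ℕ) (i : ℤ) (x : Fin n → ℤ) : ℕ :=
  (Finset.univ.filter fun v => x v = i).card

/-! A step changes `N₁ N₃` only when the updating vertex holds an extreme opinion or moves to
one. A `1` (resp. `3`) meeting any other opinion steps towards `2`, lowering the product by `N₃`
(resp. `N₁`); a `2` meeting a `1` (resp. `3`) raises it by `N₃` (resp. `N₁`). Weighting ordered
pairs of opinions `(i, j)` by `N_i N_j / n²`, the expected change is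
`(-N₁N₃(N₂ + N₃) - N₁N₃(N₁ + N₂) + 2 N₁N₂N₃) / n² = -(N₁ + N₃) N₁N₃ / n²`. -/

open Finset

lemma expVal_map {α β : Type*} [Fintype α] (p : PMF α) (g : α → β) (f : β → ℝ) :
    expVal (p.map g) f = ∑ a, (p a).toReal * f (g a) := by
  classical
  have hpoint : ∀ b, ((p.map g) b).toReal * f b =
      ∑ a, if b = g a then (p a).toReal * f (g a) else 0 := by
    intro b
    rw [PMF.map_apply, tsum_fintype,
      ENNReal.toReal_sum fun a _ => by split <;> simp [p.apply_ne_top], sum_mul]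
    refine sum_congr rfl fun a _ => ?_
    split_ifs with h <;> simp [h]
  unfold expVal
  rw [tsum_congr hpoint, Summable.tsum_finsetSum fun a _ => ⟨_, hasSum_ite_eq _ _⟩]
  exact sum_congr rfl fun a _ => tsum_ite_eq _ _

lemma expVal_map_uniformOfFintype {α β : Type*} [Fintype α] [Nonempty α] (g : α → β)
    (f : β → ℝ) :
    expVal ((PMF.uniformOfFintype α).map g) f = (∑ a, f (g a)) / Fintype.card α := by
  simp [expVal_map, PMF.uniformOfFintype_apply, ← mul_sum, div_eq_inv_mul]

lemma expVal_step (n : ℕ) [NeZero n] (x : Fin n → ℤ) (f : (Fin n → ℤ) → ℝ) :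
    expVal (step n x) f =
      (∑ v, ∑ w, f (Function.update x v (updateRule (x v) (x w)))) / (n : ℝ) ^ 2 := by
  rw [step, expVal_map_uniformOfFintype, Fintype.sum_prod_type, Fintype.card_prod,
    Fintype.card_fin, Nat.cast_mul, sq]

lemma count_update (n : ℕ) (i c : ℤ) (x : Fin n → ℤ) (v : Fin n) :
    (count n i (Function.update x v c) : ℝ) =
      count n i x + (if c = i then 1 else 0) - (if x v = i then 1 else 0) := by
  simp only [count, card_filter, Nat.cast_sum, Nat.cast_ite, Nat.cast_one, Nat.cast_zero]
  rw [← add_sum_erase _ _ (mem_univ v),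
    ← add_sum_erase _ (fun u => if x u = i then (1 : ℝ) else 0) (mem_univ v),
    sum_congr rfl fun u hu => by rw [Function.update_of_ne (ne_of_mem_erase hu)],
    Function.update_self]
  ring

lemma sum_comp_eq_sum_count {n : ℕ} {x : Fin n → ℤ} {S : Finset ℤ} (hx : ∀ v, x v ∈ S)
    (g : ℤ → ℝ) : ∑ v, g (x v) = ∑ i ∈ S, (count n i x : ℝ) * g i := by
  rw [← sum_fiberwise_of_maps_to (g := x) (t := S) fun v _ => hx v]
  refine sum_congr rfl fun i _ => ?_
  rw [count, ← nsmul_eq_mul, ← sum_const]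
  exact sum_congr rfl fun v hv => by rw [(mem_filter.mp hv).2]

lemma sum_count_eq {n : ℕ} {x : Fin n → ℤ} {S : Finset ℤ} (hx : ∀ v, x v ∈ S) :
    ∑ i ∈ S, (count n i x : ℝ) = n := by
  simpa using (sum_comp_eq_sum_count hx fun _ => 1).symm

lemma sum_sum_comp_eq_sum_sum_count {n : ℕ} {x : Fin n → ℤ} {S : Finset ℤ}
    (hx : ∀ v, x v ∈ S) (g : ℤ → ℤ → ℝ) :
    ∑ v, ∑ w, g (x v) (x w) =
      ∑ i ∈ S, ∑ j ∈ S, (count n i x : ℝ) * count n j x * g i j := by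
  rw [sum_comp_eq_sum_count hx fun i => ∑ w, g i (x w)]
  simp only [sum_comp_eq_sum_count hx (g _), mul_sum, mul_assoc]

lemma expVal_step_count_mul_count (n : ℕ) [NeZero n] {x : Fin n → ℤ} {S : Finset ℤ}
    (hx : ∀ v, x v ∈ S) (k l : ℤ) :
    expVal (step n x) (fun y => (count n k y : ℝ) * count n l y) =
      (∑ i ∈ S, ∑ j ∈ S, (count n i x : ℝ) * count n j x *
        ((count n k x + (if updateRule i j = k then 1 else 0) - (if i = k then 1 else 0)) *
          (count n l x + (if updateRule i j = l then 1 else 0) - (if i = l then 1 else 0)))) /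
        (n : ℝ) ^ 2 := by
  rw [expVal_step, ← sum_sum_comp_eq_sum_sum_count hx]
  simp only [count_update]

/-- **Exact one-step recursion for `N₁·N₃` under asynchronous incremental voting on
`K_n` with opinions in `{1,2,3}`**:
`E[N₁'·N₃' | X] = (1 − (N₁+N₃)/n²)·N₁·N₃`. -/
theorem product_recursion_three_opinions_async
    (n : ℕ) [NeZero n] (x : Fin n → ℤ) (hx : ∀ v, x v ∈ ({1, 2, 3} : Set ℤ)) :
    expVal (step n x) (fun y => (count n 1 y : ℝ) * (count n 3 y : ℝ)) =
      (1 - ((count n 1 x : ℝ) + (count n 3 x : ℝ)) / (n : ℝ) ^ 2) *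
        ((count n 1 x : ℝ) * (count n 3 x : ℝ)) := by
  have hx' : ∀ v, x v ∈ ({1, 2, 3} : Finset ℤ) := by simpa using hx
  have hn : (count n 1 x : ℝ) + count n 2 x + count n 3 x = n := by
    simpa [add_assoc] using sum_count_eq hx'
  rw [expVal_step_count_mul_count n hx' 1 3, ← hn]
  have hN : (count n 1 x : ℝ) + count n 2 x + count n 3 x ≠ 0 := by
    rw [hn]; exact_mod_cast NeZero.ne n
  simp [sum_insert, updateRule]
  field_simp
  ring

end KnAsync15
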